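/- arXiv:1512.04718 — 3 statements merged into one kernel-verified Lean document; each statement's English description precedes it below -/
import Mathlib

section
/- For 0 < γ < σ, 0 ≤ α ≤ ρ with ρ > 0, the integral ∫₀^∞ (csch(ρ t^γ)/e^{α t^γ}) t^{σ−1} dt equals (2 Γ(σ/γ) / (γ (2ρ)^{σ/γ})) · ζ(σ/γ, (α+ρ)/(2ρ)), where ζ(s,a) = Σ_{k=0}^∞ 1/(k+a)^s is the Hurwitz zeta function and csch(u) = 2/(e^u − e^{−u}). -/
/-!
Substituting `u = t ^ γ` turns the integral into `γ⁻¹` times the Mellin transform at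
`s = σ / γ` of `csch (ρ u) e^{-α u} = 2 e^{-(ρ + α) u} / (1 - e^{-2ρ u})`. Expanding the
denominator as a geometric series gives `2 ∑ₖ e^{-2ρ (k + a) u}` with
`a = (α + ρ) / (2ρ)`, and each term has Mellin transform `Γ(s) / (2ρ (k + a))^s`. All terms
are nonnegative, so summation and integration may be interchanged.
-/

open Real Set MeasureTheory

lemma setIntegral_comp_rpow_mul_rpow_Ioi (f : ℝ → ℝ) {γ : ℝ} (hγ : 0 < γ) (σ : ℝ) :
    ∫ t in Ioi (0 : ℝ), f (t ^ γ) * t ^ (σ - 1) =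
      γ⁻¹ * ∫ u in Ioi (0 : ℝ), u ^ (σ / γ - 1) * f u := by
  rw [← integral_comp_rpow_Ioi_of_pos (g := fun u => u ^ (σ / γ - 1) * f u) hγ,
    ← integral_const_mul]
  refine setIntegral_congr_fun measurableSet_Ioi fun t (ht : 0 < t) => ?_
  have hpow : (t ^ γ) ^ (σ / γ - 1) * t ^ (γ - 1) = t ^ (σ - 1) := by
    rw [← rpow_mul ht.le, ← rpow_add ht]
    congr 1
    field_simp
    ring
  rw [smul_eq_mul, ← hpow]
  field_simp

lemma hasSum_exp_neg_nat_add_mul (a : ℝ) {x : ℝ} (hx : 0 < x) :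
    HasSum (fun k : ℕ => exp (-((k + a) * x))) (exp (-(a * x)) / (1 - exp (-x))) := by
  have hr : exp (-x) < 1 := exp_lt_one_iff.2 (neg_lt_zero.2 hx)
  have hterm : (fun k : ℕ => exp (-((k + a) * x))) = fun k => exp (-(a * x)) * exp (-x) ^ k := by
    funext k
    rw [← exp_nat_mul, ← exp_add]
    ring_nf
  rw [hterm, div_eq_mul_inv]
  exact (hasSum_geometric_of_lt_one (exp_pos _).le hr).mul_left _

lemma two_div_exp_sub_exp_neg_div_exp_eq_tsum {x : ℝ} (hx : 0 < x) (y : ℝ) :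
    2 / (exp x - exp (-x)) / exp y = 2 * ∑' k : ℕ, exp (-((2 * k + 1) * x + y)) := by
  have h := (hasSum_exp_neg_nat_add_mul ((x + y) / (2 * x)) (mul_pos two_pos hx)).tsum_eq
  have hterm : ∀ k : ℕ, ((k : ℝ) + (x + y) / (2 * x)) * (2 * x) = (2 * k + 1) * x + y := by
    intro k; field_simp; ring
  simp only [hterm, show (x + y) / (2 * x) * (2 * x) = x + y by field_simp] at h
  have hinv : (exp x)⁻¹ < 1 := inv_lt_one_of_one_lt₀ (one_lt_exp_iff.2 hx)
  have hsub : exp x - (exp x)⁻¹ ≠ 0 :=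
    sub_ne_zero.2 (hinv.trans (one_lt_exp_iff.2 hx)).ne'
  have h1 : 1 - (exp x)⁻¹ * (exp x)⁻¹ ≠ 0 :=
    sub_ne_zero.2 (mul_lt_one_of_nonneg_of_lt_one_left (by positivity) hinv hinv.le).ne'
  rw [h, show -(2 * x) = -x + -x by ring]
  simp only [exp_neg, exp_add]
  field_simp

lemma integral_rpow_mul_tsum_exp_neg_mul {ι : Type*} [Countable ι] {p : ι → ℝ} {s : ℝ}
    (hs : 0 < s) (hp : ∀ i, 0 < p i) (h_sum : Summable fun i => 1 / p i ^ s) :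
    ∫ t in Ioi (0 : ℝ), t ^ (s - 1) * ∑' i, exp (-(p i * t)) =
      Gamma s * ∑' i, 1 / p i ^ s := by
  have hval (i : ι) :
      ∫ t in Ioi (0 : ℝ), t ^ (s - 1) * exp (-(p i * t)) = Gamma s * (1 / p i ^ s) := by
    rw [integral_rpow_mul_exp_neg_mul_Ioi hs (hp i), div_rpow zero_le_one (hp i).le, one_rpow,
      mul_comm]
  have hint (i : ι) : IntegrableOn (fun t => t ^ (s - 1) * exp (-(p i * t))) (Ioi 0) := by
    simpa only [rpow_one, neg_mul] using
      integrableOn_rpow_mul_exp_neg_mul_rpow (by linarith) zero_lt_one (hp i)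
  have hnorm (i : ι) : ∫ t in Ioi (0 : ℝ), ‖t ^ (s - 1) * exp (-(p i * t))‖ =
      ∫ t in Ioi (0 : ℝ), t ^ (s - 1) * exp (-(p i * t)) :=
    setIntegral_congr_fun measurableSet_Ioi fun t (ht : 0 < t) =>
      norm_of_nonneg (by positivity)
  simp_rw [← tsum_mul_left]
  rw [← integral_tsum_of_summable_integral_norm hint, tsum_congr hval]
  simpa only [hnorm, hval] using h_sum.mul_left (Gamma s)

lemma integral_rpow_mul_tsum_exp_neg_mul_nat_add {s a c : ℝ} (hs : 1 < s) (ha : 0 < a)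
    (hc : 0 < c) :
    ∫ t in Ioi (0 : ℝ), t ^ (s - 1) * ∑' k : ℕ, exp (-(c * (k + a) * t)) =
      Gamma s / c ^ s * ∑' k : ℕ, 1 / ((k : ℝ) + a) ^ s := by
  have hsplit (k : ℕ) : 1 / (c * (k + a)) ^ s = (c ^ s)⁻¹ * (1 / ((k : ℝ) + a) ^ s) := by
    rw [mul_rpow hc.le (by positivity)]
    field_simp
  have h_sum : Summable fun k : ℕ => 1 / ((k : ℝ) + a) ^ s :=
    ((summable_one_div_nat_add_rpow a s).2 hs).congr fun k => by
      rw [abs_of_pos (by positivity)]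
  rw [integral_rpow_mul_tsum_exp_neg_mul (p := fun k : ℕ => c * (k + a)) (by linarith)
    (fun k => by positivity) ((h_sum.mul_left (c ^ s)⁻¹).congr fun k => (hsplit k).symm),
    tsum_congr hsplit, tsum_mul_left]
  ring

theorem stmt0_general (σ γ α ρ : ℝ) (hγ : 0 < γ) (hγσ : γ < σ) (hα : 0 ≤ α)
    (hρ : 0 < ρ) :
    (∫ t in Set.Ioi (0:ℝ),
      (2 / (Real.exp (ρ * t ^ γ) - Real.exp (-(ρ * t ^ γ)))) / Real.exp (α * t ^ γ)
        * t ^ (σ - 1))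
    = 2 * Real.Gamma (σ / γ) / (γ * (2 * ρ) ^ (σ / γ))
      * ∑' k : ℕ, 1 / ((k : ℝ) + (α + ρ) / (2 * ρ)) ^ (σ / γ) := by
  set a := (α + ρ) / (2 * ρ)
  have hs : 1 < σ / γ := (one_lt_div hγ).2 hγσ
  have ha : 0 < a := by positivity
  have hexpand : ∀ u ∈ Ioi (0 : ℝ),
      u ^ (σ / γ - 1) * (2 / (exp (ρ * u) - exp (-(ρ * u))) / exp (α * u)) =
        2 * (u ^ (σ / γ - 1) * ∑' k : ℕ, exp (-(2 * ρ * (k + a) * u))) := by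
    intro u (hu : 0 < u)
    have hexp (k : ℕ) : (2 * k + 1) * (ρ * u) + α * u = 2 * ρ * (k + a) * u := by
      simp only [a]; field_simp; ring
    rw [two_div_exp_sub_exp_neg_div_exp_eq_tsum (mul_pos hρ hu)]
    simp only [hexp]
    ring
  rw [setIntegral_comp_rpow_mul_rpow_Ioi
      (fun u => 2 / (exp (ρ * u) - exp (-(ρ * u))) / exp (α * u)) hγ,
    setIntegral_congr_fun measurableSet_Ioi hexpand, integral_const_mul,
    integral_rpow_mul_tsum_exp_neg_mul_nat_add hs ha (by positivity)]
  ring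

/-- For 0 < γ < σ, 0 ≤ α ≤ ρ (ρ > 0):
∫₀^∞ csch(ρ t^γ)/e^{α t^γ} t^{σ−1} dt = (2Γ(σ/γ)/(γ(2ρ)^{σ/γ})) ζ(σ/γ, (α+ρ)/(2ρ)). -/
theorem stmt0 (σ γ α ρ : ℝ) (hγ : 0 < γ) (hγσ : γ < σ) (hα : 0 ≤ α) (hαρ : α ≤ ρ)
    (hρ : 0 < ρ) :
    (∫ t in Set.Ioi (0:ℝ),
      (2 / (Real.exp (ρ * t ^ γ) - Real.exp (-(ρ * t ^ γ)))) / Real.exp (α * t ^ γ)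
        * t ^ (σ - 1))
    = 2 * Real.Gamma (σ / γ) / (γ * (2 * ρ) ^ (σ / γ))
      * ∑' k : ℕ, 1 / ((k : ℝ) + (α + ρ) / (2 * ρ)) ^ (σ / γ) :=
  stmt0_general σ γ α ρ hγ hγσ hα hρ
end

section
/- For 0 < γ < σ ≤ 1 and 0 ≤ α ≤ ρ (ρ > 0), the function h(t) = csch(ρ t^γ)/e^{α t^γ} on (0,∞) satisfies h > 0, h' < 0, h'' > 0. -/
/-!
With `u = t ^ γ` the function is `φ ∘ u`, where `φ u = 2 / D u` and
`D u = exp ((ρ + α) u) - exp (-((ρ - α) u))`. Since `D > 0`, `D' > 0` and `D D'' < 2 D'²`,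
the reciprocal `φ` is decreasing and strictly convex. As `u' > 0` and `u'' ≤ 0` for `γ ≤ 1`,
`(φ ∘ u)' = φ'(u) u' < 0` and `(φ ∘ u)'' = φ''(u) u'² + φ'(u) u'' > 0`.
-/

open Real Set Filter Topology

section SecondDerivative

variable {f f' f'' φ u : ℝ → ℝ} {s t : Set ℝ} {x : ℝ}

lemma deriv_deriv_eq_of_hasDerivAt (hs : IsOpen s) (hf : ∀ y ∈ s, HasDerivAt f (f' y) y)
    (hf' : ∀ y ∈ s, HasDerivAt f' (f'' y) y) (hx : x ∈ s) : deriv (deriv f) x = f'' x := by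
  have h : deriv f =ᶠ[𝓝 x] f' :=
    eventually_of_mem (hs.mem_nhds hx) fun y hy => (hf y hy).deriv
  rw [h.deriv_eq, (hf' x hx).deriv]

lemma ContDiffOn.differentiableAt_deriv (hf : ContDiffOn ℝ 2 f s) (hs : IsOpen s) (hx : x ∈ s) :
    DifferentiableAt ℝ f x ∧ DifferentiableAt ℝ (deriv f) x :=
  ⟨(hf.differentiableOn (by norm_num)).differentiableAt (hs.mem_nhds hx),
    ((hf.deriv_of_isOpen hs (by norm_num : (1 : WithTop ℕ∞) + 1 ≤ 2)).differentiableOn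
      (by norm_num)).differentiableAt (hs.mem_nhds hx)⟩

lemma deriv_comp_neg_and_deriv_deriv_comp_pos (hs : IsOpen s) (ht : IsOpen t) (hst : MapsTo u s t)
    (hφ : ContDiffOn ℝ 2 φ t) (hu : ContDiffOn ℝ 2 u s)
    (hφ' : ∀ y ∈ t, deriv φ y < 0) (hφ'' : ∀ y ∈ t, 0 < deriv (deriv φ) y)
    (hu' : ∀ y ∈ s, 0 < deriv u y) (hu'' : ∀ y ∈ s, deriv (deriv u) y ≤ 0) (hx : x ∈ s) :
    deriv (φ ∘ u) x < 0 ∧ 0 < deriv (deriv (φ ∘ u)) x := by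
  have hcomp : ∀ y ∈ s, HasDerivAt (φ ∘ u) (deriv φ (u y) * deriv u y) y := fun y hy =>
    ((hφ.differentiableAt_deriv ht (hst hy)).1.hasDerivAt).comp y
      (hu.differentiableAt_deriv hs hy).1.hasDerivAt
  have hcomp' : ∀ y ∈ s, HasDerivAt (fun z => deriv φ (u z) * deriv u z)
      (deriv (deriv φ) (u y) * deriv u y ^ 2 + deriv φ (u y) * deriv (deriv u) y) y := by
    intro y hy
    obtain ⟨hφ₁, hφ₂⟩ := hφ.differentiableAt_deriv ht (hst hy)
    obtain ⟨hu₁, hu₂⟩ := hu.differentiableAt_deriv hs hy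
    exact ((hφ₂.hasDerivAt.comp y hu₁.hasDerivAt).mul hu₂.hasDerivAt).congr_deriv
      (by rw [Function.comp_apply]; ring)
  rw [(hcomp x hx).deriv, deriv_deriv_eq_of_hasDerivAt hs hcomp hcomp' hx]
  have hφ'x := hφ' _ (hst hx)
  refine ⟨mul_neg_of_neg_of_pos hφ'x (hu' x hx), ?_⟩
  have := mul_pos (hφ'' _ (hst hx)) (pow_pos (hu' x hx) 2)
  have := mul_nonneg_of_nonpos_of_nonpos hφ'x.le (hu'' x hx)
  linarith

end SecondDerivative

section Reciprocal

variable {D D' D'' : ℝ → ℝ} {s : Set ℝ} {c x : ℝ}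

lemma deriv_const_div_neg_and_deriv_deriv_pos (hs : IsOpen s)
    (hD : ∀ y ∈ s, HasDerivAt D (D' y) y) (hD' : ∀ y ∈ s, HasDerivAt D' (D'' y) y)
    (hD_pos : ∀ y ∈ s, 0 < D y) (hc : 0 < c) (hD'x : 0 < D' x)
    (hD''x : D x * D'' x < 2 * D' x ^ 2) (hx : x ∈ s) :
    deriv (fun y => c / D y) x < 0 ∧ 0 < deriv (deriv fun y => c / D y) x := by
  have h₁ : ∀ y ∈ s, HasDerivAt (fun y => c / D y) (-(c * D' y) / D y ^ 2) y := fun y hy =>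
    ((hasDerivAt_const y c).div (hD y hy) (hD_pos y hy).ne').congr_deriv (by ring)
  have h₂ : ∀ y ∈ s, HasDerivAt (fun y => -(c * D' y) / D y ^ 2)
      (c * (2 * D' y ^ 2 - D y * D'' y) / D y ^ 3) y := by
    intro y hy
    have hDy := (hD_pos y hy).ne'
    refine (((hD' y hy).const_mul c).neg.div ((hD y hy).pow 2) (pow_ne_zero 2 hDy)).congr_deriv ?_
    simp only [Pi.pow_apply, Pi.neg_apply]
    field_simp
    ring
  rw [(h₁ x hx).deriv, deriv_deriv_eq_of_hasDerivAt hs h₁ h₂ hx]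
  have hDx := hD_pos x hx
  exact ⟨div_neg_of_neg_of_pos (by nlinarith) (by positivity),
    div_pos (mul_pos hc (by linarith)) (by positivity)⟩

end Reciprocal

section ExpGap

variable {a b u : ℝ}

lemma exp_mul_sub_exp_neg_mul_pos (hab : 0 < a + b) (hu : 0 < u) :
    0 < exp (a * u) - exp (-(b * u)) :=
  sub_pos.2 (exp_lt_exp.2 (by nlinarith))

lemma contDiffOn_div_exp_mul_sub_exp_neg_mul (c : ℝ) (hab : 0 < a + b) :
    ContDiffOn ℝ 2 (fun u => c / (exp (a * u) - exp (-(b * u)))) (Ioi 0) :=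
  contDiffOn_const.div (by fun_prop) fun _ hu => (exp_mul_sub_exp_neg_mul_pos hab hu).ne'

lemma deriv_div_exp_mul_sub_exp_neg_mul_neg_and_deriv_deriv_pos {c : ℝ} (hc : 0 < c)
    (ha : 0 < a) (hb : 0 ≤ b) (hu : 0 < u) :
    deriv (fun u => c / (exp (a * u) - exp (-(b * u)))) u < 0 ∧
      0 < deriv (deriv fun u => c / (exp (a * u) - exp (-(b * u)))) u := by
  have hD : ∀ v : ℝ, HasDerivAt (fun u => exp (a * u) - exp (-(b * u)))
      (a * exp (a * v) + b * exp (-(b * v))) v := fun v =>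
    ((((hasDerivAt_id' v).const_mul a).exp).sub
      (((hasDerivAt_id' v).const_mul b).neg.exp)).congr_deriv (by simp only [Pi.neg_apply]; ring)
  have hD' : ∀ v : ℝ, HasDerivAt (fun u => a * exp (a * u) + b * exp (-(b * u)))
      (a ^ 2 * exp (a * v) - b ^ 2 * exp (-(b * v))) v := fun v =>
    (((((hasDerivAt_id' v).const_mul a).exp).const_mul a).add
      ((((hasDerivAt_id' v).const_mul b).neg.exp).const_mul b)).congr_deriv
        (by simp only [Pi.neg_apply]; ring)
  have hE₁ := exp_pos (a * u)
  have hE₂ := exp_pos (-(b * u))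
  refine deriv_const_div_neg_and_deriv_deriv_pos isOpen_Ioi (fun v _ => hD v) (fun v _ => hD' v)
    (fun v hv => exp_mul_sub_exp_neg_mul_pos (by linarith) hv) hc (by positivity) ?_ hu
  -- 2 D'² - D D'' = a²E₁² + b²E₂² + (a² + 4ab + b²) E₁E₂ with E₁ = exp (a u), E₂ = exp (-(b u))
  have hab : 0 ≤ a ^ 2 + 4 * a * b + b ^ 2 := by nlinarith [mul_nonneg ha.le hb]
  nlinarith [mul_pos (pow_pos ha 2) (pow_pos hE₁ 2),
    mul_nonneg (sq_nonneg b) (sq_nonneg (exp (-(b * u)))), mul_nonneg hab (mul_pos hE₁ hE₂).le]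

end ExpGap

section Rpow

variable {γ t : ℝ}

lemma contDiffOn_rpow_const_Ioi (γ : ℝ) : ContDiffOn ℝ 2 (fun t : ℝ => t ^ γ) (Ioi 0) :=
  fun _ ht => (contDiffAt_rpow_const_of_ne (ne_of_gt ht)).contDiffWithinAt

lemma deriv_rpow_const_pos (hγ : 0 < γ) (ht : 0 < t) : 0 < deriv (fun t : ℝ => t ^ γ) t := by
  rw [Real.deriv_rpow_const]
  exact mul_pos hγ (rpow_pos_of_pos ht _)

lemma deriv_deriv_rpow_const_nonpos (hγ₀ : 0 ≤ γ) (hγ₁ : γ ≤ 1) (ht : 0 ≤ t) :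
    deriv (deriv fun t : ℝ => t ^ γ) t ≤ 0 := by
  simp only [deriv_rpow_const', deriv_const_mul_field']
  exact mul_nonpos_of_nonneg_of_nonpos hγ₀
    (mul_nonpos_of_nonpos_of_nonneg (by linarith) (rpow_nonneg ht _))

end Rpow

lemma div_exp_sub_exp_neg_mul_exp_neg (c ρ α u : ℝ) :
    c / (exp (ρ * u) - exp (-(ρ * u))) * exp (-(α * u)) =
      c / (exp ((ρ + α) * u) - exp (-((ρ - α) * u))) := by
  rw [show (ρ + α) * u = ρ * u + α * u by ring, show -((ρ - α) * u) = -(ρ * u) + α * u by ring,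
    exp_add, exp_add, ← sub_mul, exp_neg (α * u), ← div_eq_mul_inv, div_div]

/-- For 0 < γ < σ ≤ 1 and 0 ≤ α ≤ ρ (ρ > 0), h(t) = csch(ρ t^γ) e^{−α t^γ} satisfies
h > 0, h' < 0, h'' > 0 on (0,∞). -/
theorem stmt8 (σ γ α ρ : ℝ) (hγ : 0 < γ) (hγσ : γ < σ) (hσ : σ ≤ 1) (hα : 0 ≤ α)
    (hαρ : α ≤ ρ) (hρ : 0 < ρ) :
    ∀ t : ℝ, 0 < t →
      0 < (2 / (Real.exp (ρ * t ^ γ) - Real.exp (-(ρ * t ^ γ)))) * Real.exp (-(α * t ^ γ)) ∧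
      deriv (fun t : ℝ =>
        (2 / (Real.exp (ρ * t ^ γ) - Real.exp (-(ρ * t ^ γ)))) * Real.exp (-(α * t ^ γ))) t < 0 ∧
      0 < deriv (deriv (fun t : ℝ =>
        (2 / (Real.exp (ρ * t ^ γ) - Real.exp (-(ρ * t ^ γ)))) * Real.exp (-(α * t ^ γ)))) t := by
  intro t ht
  have hh : (fun t : ℝ => 2 / (exp (ρ * t ^ γ) - exp (-(ρ * t ^ γ))) * exp (-(α * t ^ γ))) =
      (fun u => 2 / (exp ((ρ + α) * u) - exp (-((ρ - α) * u)))) ∘ fun t => t ^ γ :=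
    funext fun t => div_exp_sub_exp_neg_mul_exp_neg 2 ρ α (t ^ γ)
  have hφ (u : ℝ) (hu : u ∈ Ioi 0) :=
    deriv_div_exp_mul_sub_exp_neg_mul_neg_and_deriv_deriv_pos two_pos
      (by linarith : 0 < ρ + α) (by linarith : 0 ≤ ρ - α) hu
  refine ⟨mul_pos (div_pos two_pos
    (exp_mul_sub_exp_neg_mul_pos (by linarith) (rpow_pos_of_pos ht γ))) (exp_pos _), ?_⟩
  rw [hh]
  exact deriv_comp_neg_and_deriv_deriv_comp_pos isOpen_Ioi isOpen_Ioi
    (fun _ hs => rpow_pos_of_pos hs γ)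
    (contDiffOn_div_exp_mul_sub_exp_neg_mul 2 (by linarith)) (contDiffOn_rpow_const_Ioi γ)
    (fun u hu => (hφ u hu).1) (fun u hu => (hφ u hu).2)
    (fun _ hs => deriv_rpow_const_pos hγ hs)
    (fun _ hs => deriv_deriv_rpow_const_nonpos hγ.le (hγσ.le.trans hσ) hs.le) ht
end

section
/- With the assumptions on μ, ν, and parameters 0 ≤ α ≤ ρ (ρ > 0), 0 < γ < σ ≤ 1, if ν_n ≥ ν_{n+1} eventually and V(∞) = ∞, then for all x > 0, ω_δ(σ,x) > k(σ)(1 − θ_δ(σ,x)), where 0 < θ_δ(σ,x) ≤ L (U^δ(x) V_{n₀})^{σ−γ}/(k(σ)(σ−γ)) = O((U(x))^{δ(σ−γ)}) for some constant L > 0. -/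
/-!
Let `F(u) = csch(ρu^γ) e^{-αu^γ} u^{σ-1}` be the integrand of `k(σ)`, so that
`k(σ)(1 - θ) = ∫_b^∞ F` with `b = U^δ(x) V_{n₀}`. With the nodes `s_n = U^δ(x) V_n` the sum
`ω_δ(σ,x)` is the Riemann sum `Σ F(U^δ Ṽ_n)(s_n - s_{n-1})`, whose tags lie in the right half
of `(s_{n-1}, s_n]`. Since `F` is strictly decreasing and the gaps `U^δ ν_n` decrease from `n₀`
on, every piece `∫_{s_n}^{s_{n+1}} F` with `n ≥ n₀` is strictly smaller than the term with
index `n`; summing gives `ω > ∫_b^∞ F`. The right-half tags make each term at most twice the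
corresponding piece, so the sum converges. Near `0` we have `F(u) ≤ u^{σ-γ-1}/ρ`, which yields
the bound `θ ≤ b^{σ-γ}/(ρ k(σ)(σ-γ))`; near `∞`, `F` decays like `exp(-ρu^γ)`.
-/

noncomputable def Ufun13 (μ : ℝ → ℝ) (x : ℝ) : ℝ := ∫ t in Set.Ioc (0:ℝ) x, μ t

noncomputable def h13 (ρ α γ : ℝ) (u : ℝ) : ℝ :=
  (2 / (Real.exp (ρ * u ^ γ) - Real.exp (-(ρ * u ^ γ)))) / Real.exp (α * u ^ γ)

/-- k(σ) = ∫₀^∞ csch(ρu^γ)/e^{αu^γ} u^{σ−1} du. -/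
noncomputable def k13 (ρ α γ σ : ℝ) : ℝ := ∫ u in Set.Ioi (0:ℝ), h13 ρ α γ u * u ^ (σ - 1)

/-- θ_δ(σ,x) = (1/k(σ)) ∫₀^{U^δ(x) V_{n₀}} csch(ρu^γ)/e^{αu^γ} u^{σ−1} du. -/
noncomputable def θ13 (μ : ℝ → ℝ) (ρ α γ σ δ : ℝ) (c : ℝ) (x : ℝ) : ℝ :=
  (1 / k13 ρ α γ σ) * ∫ u in Set.Ioo (0:ℝ) ((Ufun13 μ x) ^ δ * c), h13 ρ α γ u * u ^ (σ - 1)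

open Real Set MeasureTheory Filter Topology

section RiemannSums

variable {f : ℝ → ℝ} {a b : ℝ}

theorem hasSum_setIntegral_Ioc_of_tendsto_atTop {E : Type*} [NormedAddCommGroup E]
    [NormedSpace ℝ E] {g : ℝ → E} {s : ℕ → ℝ} (hs : Monotone s) (hst : Tendsto s atTop atTop)
    (hg : IntegrableOn g (Ioi (s 0))) :
    HasSum (fun n => ∫ x in Ioc (s n) (s (n + 1)), g x) (∫ x in Ioi (s 0), g x) := by
  have hU : ⋃ n, Ioc (s n) (s (n + 1)) = Ioi (s 0) :=
    iUnion_Ioc_map_succ_eq_Ioi (fun n => hs n.zero_le) (not_bddAbove_of_tendsto_atTop hst)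
  rw [← hU] at hg ⊢
  exact hasSum_integral_iUnion (fun _ => measurableSet_Ioc) hs.pairwise_disjoint_on_Ioc_succ hg

theorem StrictAntiOn.setIntegral_Ioc_lt_mul_sub (hf : StrictAntiOn f (Icc a b)) (hab : a < b) :
    ∫ x in Ioc a b, f x < f a * (b - a) := by
  have hfi : IntervalIntegrable f volume a b :=
    (hf.antitoneOn.mono (uIcc_of_le hab.le).subset).intervalIntegrable
  have hpos : 0 < ∫ x in a..b, (f a - f x) :=
    intervalIntegral.intervalIntegral_pos_of_pos_on (intervalIntegrable_const.sub hfi)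
      (fun x hx => sub_pos.2 (hf ⟨le_rfl, hab.le⟩ (Ioo_subset_Icc_self hx) hx.1)) hab
  rw [intervalIntegral.integral_sub intervalIntegrable_const hfi, intervalIntegral.integral_const,
    intervalIntegral.integral_of_le hab.le, smul_eq_mul] at hpos
  linarith

theorem AntitoneOn.mul_sub_le_two_mul_setIntegral_Ioc (hf : AntitoneOn f (Ioc a b))
    (hf0 : ∀ x ∈ Ioc a b, 0 ≤ f x) (hfi : IntegrableOn f (Ioc a b)) (hab : a ≤ b) :
    f ((a + b) / 2) * (b - a) ≤ 2 * ∫ x in Ioc a b, f x := by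
  set m := (a + b) / 2 with hm
  have ham : a ≤ m := by linarith
  have hmb : m ≤ b := by linarith
  have hleft : f m * (m - a) ≤ ∫ x in Ioc a m, f x := by
    have := setIntegral_ge_of_const_le_real measurableSet_Ioc measure_Ioc_lt_top.ne
      (fun x hx => hf ⟨hx.1, hx.2.trans hmb⟩ ⟨hx.1.trans_le hx.2, hmb⟩ hx.2)
      (hfi.mono_set (Ioc_subset_Ioc_right hmb))
    rwa [Real.volume_real_Ioc_of_le ham] at this
  have hsub : ∫ x in Ioc a m, f x ≤ ∫ x in Ioc a b, f x :=
    setIntegral_mono_set hfi ((ae_restrict_iff' measurableSet_Ioc).2 (ae_of_all _ hf0))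
      (Ioc_subset_Ioc_right hmb).eventuallyLE
  have : f m * (b - a) = 2 * (f m * (m - a)) := by ring
  linarith

variable {s v : ℕ → ℝ}

theorem summable_mul_sub_of_antitoneOn (hf : AntitoneOn f (Ioi (s 0)))
    (hf0 : ∀ x ∈ Ioi (s 0), 0 ≤ f x) (hfi : IntegrableOn f (Ioi (s 0))) (hs : StrictMono s)
    (hst : Tendsto s atTop atTop) (hv : ∀ n, (s n + s (n + 1)) / 2 ≤ v n) :
    Summable fun n => f (v n) * (s (n + 1) - s n) := by
  have hsub : ∀ n, Ioc (s n) (s (n + 1)) ⊆ Ioi (s 0) := fun n x hx =>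
    (hs.monotone n.zero_le).trans_lt hx.1
  have hmid : ∀ n, s 0 < (s n + s (n + 1)) / 2 := fun n => by
    linarith [hs.monotone n.zero_le, hs (Nat.lt_succ_self n)]
  refine Summable.of_nonneg_of_le (fun n => ?_) (fun n => ?_)
    ((hasSum_setIntegral_Ioc_of_tendsto_atTop hs.monotone hst hfi).summable.mul_left 2)
  · exact mul_nonneg (hf0 _ ((hmid n).trans_le (hv n)))
      (sub_nonneg.2 (hs.monotone n.le_succ))
  · calc f (v n) * (s (n + 1) - s n)
        ≤ f ((s n + s (n + 1)) / 2) * (s (n + 1) - s n) :=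
          mul_le_mul_of_nonneg_right (hf (hmid n) ((hmid n).trans_le (hv n)) (hv n))
            (sub_nonneg.2 (hs.monotone n.le_succ))
      _ ≤ 2 * ∫ x in Ioc (s n) (s (n + 1)), f x :=
          (hf.mono (hsub n)).mul_sub_le_two_mul_setIntegral_Ioc (fun x hx => hf0 x (hsub n hx))
            (hfi.mono_set (hsub n)) (hs.monotone n.le_succ)

theorem setIntegral_Ioi_lt_tsum_mul_sub {k : ℕ} (hf : StrictAntiOn f (Ioi (s 0)))
    (hf0 : ∀ x ∈ Ioi (s 0), 0 ≤ f x) (hfi : IntegrableOn f (Ioi (s 0))) (hs : StrictMono s)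
    (hst : Tendsto s atTop atTop) (hv : ∀ n, (s n + s (n + 1)) / 2 ≤ v n ∧ v n ≤ s (n + 1))
    (hgap : ∀ n, k ≤ n → s (n + 2) - s (n + 1) ≤ s (n + 1) - s n) :
    ∫ x in Ioi (s (k + 1)), f x < ∑' n, f (v n) * (s (n + 1) - s n) := by
  set T : ℕ → ℝ := fun n => f (v n) * (s (n + 1) - s n)
  have hTsum : Summable T := summable_mul_sub_of_antitoneOn hf.antitoneOn hf0 hfi hs hst
    fun n => (hv n).1
  have hpos : ∀ n, s 0 < s (n + 1) := fun n => hs n.succ_pos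
  have hv0 : ∀ n, s 0 < v n := fun n => by
    linarith [hs.monotone n.zero_le, hs (Nat.lt_succ_self n), (hv n).1]
  have hT0 : ∀ n, 0 ≤ T n := fun n =>
    mul_nonneg (hf0 _ (hv0 n)) (sub_nonneg.2 (hs.monotone n.le_succ))
  have htail : HasSum (fun n => ∫ x in Ioc (s (n + k + 1)) (s (n + k + 1 + 1)), f x)
      (∫ x in Ioi (s (k + 1)), f x) := by
    have := hasSum_setIntegral_Ioc_of_tendsto_atTop (g := f) (s := fun n => s (n + k + 1))
      (hs.monotone.comp fun m n h => by omega)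
      (hst.comp ((tendsto_add_atTop_nat 1).comp (tendsto_add_atTop_nat k)))
      (by simpa using hfi.mono_set (Ioi_subset_Ioi (hpos k).le))
    simpa only [zero_add, Nat.add_right_comm _ 1] using this
  have hlt : ∀ n, ∫ x in Ioc (s (n + k + 1)) (s (n + k + 1 + 1)), f x < T (n + k) := fun n =>
    calc ∫ x in Ioc (s (n + k + 1)) (s (n + k + 1 + 1)), f x
        < f (s (n + k + 1)) * (s (n + k + 1 + 1) - s (n + k + 1)) :=
          (hf.mono fun x hx => (hpos _).trans_le hx.1).setIntegral_Ioc_lt_mul_sub (hs (by omega))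
      _ ≤ T (n + k) := mul_le_mul (hf.antitoneOn (hv0 _) (hpos _) (hv _).2)
            (hgap _ le_add_self) (sub_nonneg.2 (hs.monotone (by omega))) (hf0 _ (hv0 _))
  calc ∫ x in Ioi (s (k + 1)), f x < ∑' n, T (n + k) :=
        hasSum_lt (fun n => (hlt n).le) (hlt 0) htail ((summable_nat_add_iff k).2 hTsum).hasSum
    _ ≤ ∑' n, T n := by
        rw [← hTsum.sum_add_tsum_nat_add k]
        exact le_add_of_nonneg_left (Finset.sum_nonneg fun i _ => hT0 i)

end RiemannSums

theorem sinh_mul_exp_le_sinh_mul_exp {s t : ℝ} (hst : s ≤ t) :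
    sinh s * exp t ≤ sinh t * exp s := by
  have h : exp (-t) * exp s ≤ exp (-s) * exp t := by
    rw [← exp_add, ← exp_add]
    exact exp_le_exp.2 (by linarith)
  rw [sinh_eq, sinh_eq]
  linarith

section Kernel

variable {ρ α γ σ : ℝ}

theorem h13_eq_inv_sinh_mul_exp (u : ℝ) : h13 ρ α γ u = (sinh (ρ * u ^ γ) * exp (α * u ^ γ))⁻¹ := by
  rw [h13, mul_inv, sinh_eq, inv_div, div_eq_mul_inv (2 / _)]

theorem h13_pos (hρ : 0 < ρ) {u : ℝ} (hu : 0 < u) : 0 < h13 ρ α γ u := by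
  rw [h13_eq_inv_sinh_mul_exp]
  have := sinh_pos_iff.2 (mul_pos hρ (rpow_pos_of_pos hu γ))
  positivity

theorem h13_strictAntiOn (hα : 0 ≤ α) (hρ : 0 < ρ) (hγ : 0 < γ) :
    StrictAntiOn (h13 ρ α γ) (Ioi 0) := by
  intro a ha b hb hab
  have hpow : a ^ γ < b ^ γ := rpow_lt_rpow (le_of_lt ha) hab hγ
  have hsa : 0 < sinh (ρ * a ^ γ) := sinh_pos_iff.2 (mul_pos hρ (rpow_pos_of_pos ha γ))
  have hsb : 0 < sinh (ρ * b ^ γ) := sinh_pos_iff.2 (mul_pos hρ (rpow_pos_of_pos hb γ))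
  simp only [h13_eq_inv_sinh_mul_exp]
  apply inv_strictAnti₀ (by positivity)
  calc sinh (ρ * a ^ γ) * exp (α * a ^ γ) < sinh (ρ * b ^ γ) * exp (α * a ^ γ) := by
        gcongr; exact sinh_lt_sinh.2 (by gcongr)
    _ ≤ sinh (ρ * b ^ γ) * exp (α * b ^ γ) := by gcongr

theorem h13_le_inv (hα : 0 ≤ α) (hρ : 0 < ρ) {u : ℝ} (hu : 0 < u) :
    h13 ρ α γ u ≤ (ρ * u ^ γ)⁻¹ := by
  have ht : 0 < ρ * u ^ γ := mul_pos hρ (rpow_pos_of_pos hu γ)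
  rw [h13_eq_inv_sinh_mul_exp]
  apply inv_anti₀ ht
  calc ρ * u ^ γ ≤ sinh (ρ * u ^ γ) := self_le_sinh_iff.2 ht.le
    _ ≤ sinh (ρ * u ^ γ) * exp (α * u ^ γ) :=
        le_mul_of_one_le_right (sinh_pos_iff.2 ht).le (one_le_exp (by positivity))

theorem h13_le_exp (hα : 0 ≤ α) (hρ : 0 < ρ) (hγ : 0 ≤ γ) {u : ℝ} (hu : 1 ≤ u) :
    h13 ρ α γ u ≤ exp ρ / sinh ρ * exp (-ρ * u ^ γ) := by
  have hρt : ρ ≤ ρ * u ^ γ := le_mul_of_one_le_right hρ.le (one_le_rpow hu hγ)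
  have hsρ : 0 < sinh ρ := sinh_pos_iff.2 hρ
  have hsinh : 0 < sinh (ρ * u ^ γ) := sinh_pos_iff.2 (hρ.trans_le hρt)
  rw [h13_eq_inv_sinh_mul_exp, neg_mul, exp_neg, ← div_eq_mul_inv, div_div]
  calc (sinh (ρ * u ^ γ) * exp (α * u ^ γ))⁻¹ ≤ (sinh (ρ * u ^ γ))⁻¹ :=
        inv_anti₀ hsinh (le_mul_of_one_le_right hsinh.le (one_le_exp (by positivity)))
    _ = exp ρ / (sinh (ρ * u ^ γ) * exp ρ) := by field_simp
    _ ≤ exp ρ / (sinh ρ * exp (ρ * u ^ γ)) :=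
        div_le_div_of_nonneg_left (exp_pos _).le (by positivity)
          (sinh_mul_exp_le_sinh_mul_exp hρt)

noncomputable def kIntegrand (ρ α γ σ u : ℝ) : ℝ := h13 ρ α γ u * u ^ (σ - 1)

theorem kIntegrand_pos (hρ : 0 < ρ) {u : ℝ} (hu : 0 < u) : 0 < kIntegrand ρ α γ σ u :=
  mul_pos (h13_pos hρ hu) (rpow_pos_of_pos hu _)

theorem kIntegrand_strictAntiOn (hα : 0 ≤ α) (hρ : 0 < ρ) (hγ : 0 < γ) (hσ : σ ≤ 1) :
    StrictAntiOn (kIntegrand ρ α γ σ) (Ioi 0) := fun a ha b hb hab =>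
  calc h13 ρ α γ b * b ^ (σ - 1) < h13 ρ α γ a * b ^ (σ - 1) :=
        mul_lt_mul_of_pos_right (h13_strictAntiOn hα hρ hγ ha hb hab) (rpow_pos_of_pos hb _)
    _ ≤ h13 ρ α γ a * a ^ (σ - 1) :=
        mul_le_mul_of_nonneg_left (rpow_le_rpow_of_nonpos ha hab.le (by linarith))
          (h13_pos hρ ha).le

theorem kIntegrand_le_rpow (hα : 0 ≤ α) (hρ : 0 < ρ) {u : ℝ} (hu : 0 < u) :
    kIntegrand ρ α γ σ u ≤ ρ⁻¹ * u ^ (σ - γ - 1) :=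
  calc h13 ρ α γ u * u ^ (σ - 1) ≤ (ρ * u ^ γ)⁻¹ * u ^ (σ - 1) :=
        mul_le_mul_of_nonneg_right (h13_le_inv hα hρ hu) (rpow_nonneg hu.le _)
    _ = ρ⁻¹ * u ^ (σ - γ - 1) := by
        rw [mul_inv, ← rpow_neg hu.le, mul_assoc, ← rpow_add hu]
        ring_nf

theorem measurable_kIntegrand : Measurable (kIntegrand ρ α γ σ) := by
  unfold kIntegrand h13
  fun_prop

theorem integrableOn_kIntegrand (hα : 0 ≤ α) (hρ : 0 < ρ) (hγ : 0 < γ) (hγσ : γ < σ) :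
    IntegrableOn (kIntegrand ρ α γ σ) (Ioi 0) := by
  have hmeas := measurable_kIntegrand (ρ := ρ) (α := α) (γ := γ) (σ := σ)
  have hnear : IntegrableOn (kIntegrand ρ α γ σ) (Ioc 0 1) := by
    have hg : IntegrableOn (fun u => ρ⁻¹ * u ^ (σ - γ - 1)) (Ioc 0 1) :=
      ((intervalIntegrable_iff_integrableOn_Ioc_of_le zero_le_one).1
        (intervalIntegral.intervalIntegrable_rpow' (by linarith))).const_mul _
    refine hg.mono' hmeas.aestronglyMeasurable ((ae_restrict_iff' measurableSet_Ioc).2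
      (ae_of_all _ fun u hu => ?_))
    rw [norm_of_nonneg (kIntegrand_pos hρ hu.1).le]
    exact kIntegrand_le_rpow hα hρ hu.1
  have hfar : IntegrableOn (kIntegrand ρ α γ σ) (Ioi 1) := by
    have hg : IntegrableOn (fun u => exp ρ / sinh ρ * (u ^ (σ - 1) * exp (-ρ * u ^ γ)))
        (Ioi 1) :=
      ((integrableOn_rpow_mul_exp_neg_mul_rpow (by linarith) hγ hρ).mono_set
        (Ioi_subset_Ioi zero_le_one)).const_mul _
    refine hg.mono' hmeas.aestronglyMeasurable ((ae_restrict_iff' measurableSet_Ioi).2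
      (ae_of_all _ fun u (hu : 1 < u) => ?_))
    have hu0 : 0 < u := one_pos.trans hu
    rw [norm_of_nonneg (kIntegrand_pos hρ hu0).le, kIntegrand, mul_left_comm, mul_comm]
    exact mul_le_mul_of_nonneg_left (h13_le_exp hα hρ hγ.le hu.le) (rpow_nonneg hu0.le _)
  rw [← Ioc_union_Ioi_eq_Ioi zero_le_one]
  exact hnear.union hfar

theorem k13_eq_integral_kIntegrand : k13 ρ α γ σ = ∫ u in Ioi 0, kIntegrand ρ α γ σ u := rfl

theorem intervalIntegral_kIntegrand_pos (hρ : 0 < ρ)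
    (hfi : IntegrableOn (kIntegrand ρ α γ σ) (Ioi 0)) {b : ℝ} (hb : 0 < b) :
    0 < ∫ u in 0..b, kIntegrand ρ α γ σ u :=
  intervalIntegral.intervalIntegral_pos_of_pos_on
    ((intervalIntegrable_iff_integrableOn_Ioc_of_le hb.le).2 (hfi.mono_set Ioc_subset_Ioi_self))
    (fun _ hu => kIntegrand_pos hρ hu.1) hb

theorem intervalIntegral_kIntegrand_le (hα : 0 ≤ α) (hρ : 0 < ρ) (hγσ : γ < σ)
    (hfi : IntegrableOn (kIntegrand ρ α γ σ) (Ioi 0)) {b : ℝ} (hb : 0 ≤ b) :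
    ∫ u in 0..b, kIntegrand ρ α γ σ u ≤ ρ⁻¹ * b ^ (σ - γ) / (σ - γ) := by
  have hr : -1 < σ - γ - 1 := by linarith
  calc ∫ u in 0..b, kIntegrand ρ α γ σ u ≤ ∫ u in 0..b, ρ⁻¹ * u ^ (σ - γ - 1) :=
        intervalIntegral.integral_mono_on_of_le_Ioo hb
          ((intervalIntegrable_iff_integrableOn_Ioc_of_le hb).2
            (hfi.mono_set Ioc_subset_Ioi_self))
          ((intervalIntegral.intervalIntegrable_rpow' hr).const_mul _)
          (fun _ hu => kIntegrand_le_rpow hα hρ hu.1)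
    _ = ρ⁻¹ * b ^ (σ - γ) / (σ - γ) := by
        rw [intervalIntegral.integral_const_mul, integral_rpow (Or.inl hr),
          zero_rpow (by linarith), sub_zero, sub_add_cancel, mul_div_assoc]

theorem k13_pos (hρ : 0 < ρ) (hfi : IntegrableOn (kIntegrand ρ α γ σ) (Ioi 0)) :
    0 < k13 ρ α γ σ := by
  rw [k13_eq_integral_kIntegrand,
    ← intervalIntegral.integral_interval_add_Ioi hfi (hfi.mono_set (Ioi_subset_Ioi zero_le_one))]
  exact add_pos_of_pos_of_nonneg (intervalIntegral_kIntegrand_pos hρ hfi one_pos)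
    (setIntegral_nonneg measurableSet_Ioi fun u (hu : 1 < u) =>
      (kIntegrand_pos hρ (one_pos.trans hu)).le)

theorem θ13_eq_intervalIntegral_div (μ : ℝ → ℝ) {δ c x : ℝ} (hb : 0 ≤ Ufun13 μ x ^ δ * c) :
    θ13 μ ρ α γ σ δ c x
      = (∫ u in 0..Ufun13 μ x ^ δ * c, kIntegrand ρ α γ σ u) / k13 ρ α γ σ := by
  rw [θ13, intervalIntegral.integral_of_le hb, integral_Ioc_eq_integral_Ioo, one_div_mul_eq_div]
  rfl

theorem k13_sub_intervalIntegral_kIntegrand (hfi : IntegrableOn (kIntegrand ρ α γ σ) (Ioi 0))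
    {b : ℝ} (hb : 0 ≤ b) :
    k13 ρ α γ σ - ∫ u in 0..b, kIntegrand ρ α γ σ u = ∫ u in Ioi b, kIntegrand ρ α γ σ u := by
  rw [k13_eq_integral_kIntegrand, ← intervalIntegral.integral_interval_add_Ioi hfi
    (hfi.mono_set (Ioi_subset_Ioi hb)), add_sub_cancel_left]

theorem h13_mul_eq_kIntegrand_mul {D V : ℝ} (hD : 0 < D) (hV : 0 ≤ V) (w : ℝ) :
    h13 ρ α γ (D * V) * (D ^ σ * w / V ^ (1 - σ)) = kIntegrand ρ α γ σ (D * V) * (D * w) := by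
  rw [kIntegrand, mul_rpow hD.le hV, rpow_sub_one hD.ne', show σ - 1 = -(1 - σ) by ring,
    rpow_neg hV]
  field_simp

theorem Ufun13_pos {μ : ℝ → ℝ} (hμpos : ∀ x : ℝ, 0 < x → 0 < μ x) {x : ℝ}
    (hμint : IntegrableOn μ (Ioc 0 x)) (hx : 0 < x) : 0 < Ufun13 μ x := by
  rw [Ufun13, ← intervalIntegral.integral_of_le hx.le]
  exact intervalIntegral.intervalIntegral_pos_of_pos_on
    ((intervalIntegrable_iff_integrableOn_Ioc_of_le hx.le).2 hμint) (fun t ht => hμpos t ht.1) hx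

theorem setIntegral_Ioi_kIntegrand_lt_tsum (hα : 0 ≤ α) (hρ : 0 < ρ) (hγ : 0 < γ)
    (hγσ : γ < σ) (hσ : σ ≤ 1) {ν Vt : ℕ → ℝ} {k : ℕ} {D : ℝ} (hD : 0 < D)
    (hν : ∀ n : ℕ, 1 ≤ n → 0 < ν n) (hmono : ∀ n : ℕ, k + 1 ≤ n → ν (n + 1) ≤ ν n)
    (hVt : ∀ n : ℕ, 1 ≤ n →
      (∑ j ∈ Finset.Icc 1 n, ν j) - ν n / 2 ≤ Vt n ∧ Vt n ≤ ∑ j ∈ Finset.Icc 1 n, ν j)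
    (hdiv : Tendsto (fun n : ℕ => ∑ j ∈ Finset.Icc 1 n, ν j) atTop atTop) :
    ∫ u in Ioi (D * ∑ j ∈ Finset.Icc 1 (k + 1), ν j), kIntegrand ρ α γ σ u
      < ∑' n : ℕ, h13 ρ α γ (D * Vt (n + 1)) * (D ^ σ * ν (n + 1) / Vt (n + 1) ^ (1 - σ)) := by
  set W : ℕ → ℝ := fun n => ∑ j ∈ Finset.Icc 1 n, ν j with hWdef
  have hW : ∀ n, W (n + 1) = W n + ν (n + 1) := fun n => Finset.sum_Icc_succ_top (by omega) ν
  have hW0 : D * W 0 = 0 := by simp [hWdef]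
  have hWnonneg : ∀ n, 0 ≤ W n := fun n =>
    Finset.sum_nonneg fun j hj => (hν j (Finset.mem_Icc.1 hj).1).le
  have hVW : ∀ n, W n + ν (n + 1) / 2 ≤ Vt (n + 1) ∧ Vt (n + 1) ≤ W (n + 1) := fun n => by
    have := hVt (n + 1) (by omega)
    exact ⟨by linarith [hW n], this.2⟩
  have hlt := setIntegral_Ioi_lt_tsum_mul_sub (f := kIntegrand ρ α γ σ) (s := fun n => D * W n)
    (v := fun n => D * Vt (n + 1)) (k := k)
    (by rw [hW0]; exact kIntegrand_strictAntiOn hα hρ hγ hσ)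
    (by rw [hW0]; exact fun u hu => (kIntegrand_pos hρ hu).le)
    (by rw [hW0]; exact integrableOn_kIntegrand hα hρ hγ hγσ)
    (strictMono_nat_of_lt_succ fun n => by
      simp only [hW, mul_add]
      linarith [mul_pos hD (hν (n + 1) (by omega))])
    (hdiv.const_mul_atTop hD)
    (fun n => by
      simp only [hW] at hVW ⊢
      constructor <;> nlinarith [hVW n])
    (fun n hn => by
      simp only [hW]
      nlinarith [hmono (n + 1) (by omega)])
  refine hlt.trans_eq (tsum_congr fun n => ?_)
  have hV : 0 ≤ Vt (n + 1) := by linarith [hWnonneg n, hVW n, hν (n + 1) (by omega)]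
  rw [h13_mul_eq_kIntegrand_mul hD hV, hW]
  ring_nf

end Kernel

theorem stmt13_general (μ : ℝ → ℝ) (ν Vt : ℕ → ℝ) (σ γ α ρ δ : ℝ) (n₀ : ℕ) (hn₀ : 1 ≤ n₀)
    (hμpos : ∀ x : ℝ, 0 < x → 0 < μ x)
    (hμint : ∀ x : ℝ, 0 < x → MeasureTheory.IntegrableOn μ (Set.Ioc 0 x))
    (hν : ∀ n : ℕ, 1 ≤ n → 0 < ν n)
    (hmono : ∀ n : ℕ, n₀ ≤ n → ν (n + 1) ≤ ν n)
    (hVt : ∀ n : ℕ, 1 ≤ n →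
      (∑ j ∈ Finset.Icc 1 n, ν j) - ν n / 2 ≤ Vt n ∧ Vt n ≤ ∑ j ∈ Finset.Icc 1 n, ν j)
    (hdiv : Filter.Tendsto (fun n : ℕ => ∑ j ∈ Finset.Icc 1 n, ν j)
      Filter.atTop Filter.atTop)
    (hα : 0 ≤ α) (hρ : 0 < ρ)
    (hγ : 0 < γ) (hγσ : γ < σ) (hσ : σ ≤ 1) :
    ∃ L : ℝ, 0 < L ∧ ∀ x : ℝ, 0 < x →
      k13 ρ α γ σ * (1 - θ13 μ ρ α γ σ δ (∑ j ∈ Finset.Icc 1 n₀, ν j) x)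
        < (∑' n : ℕ,
            h13 ρ α γ ((Ufun13 μ x) ^ δ * Vt (n + 1))
              * ((Ufun13 μ x) ^ (δ * σ) * ν (n + 1) / Vt (n + 1) ^ (1 - σ))) ∧
      0 < θ13 μ ρ α γ σ δ (∑ j ∈ Finset.Icc 1 n₀, ν j) x ∧
      θ13 μ ρ α γ σ δ (∑ j ∈ Finset.Icc 1 n₀, ν j) x
        ≤ L * ((Ufun13 μ x) ^ δ * ∑ j ∈ Finset.Icc 1 n₀, ν j) ^ (σ - γ)
            / (k13 ρ α γ σ * (σ - γ)) := by
  obtain ⟨k, rfl⟩ : ∃ k, n₀ = k + 1 := ⟨n₀ - 1, by omega⟩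
  have hfi := integrableOn_kIntegrand hα hρ hγ hγσ
  have hk := k13_pos hρ hfi
  refine ⟨ρ⁻¹, inv_pos.2 hρ, fun x hx => ?_⟩
  have hD : 0 < Ufun13 μ x ^ δ := rpow_pos_of_pos (Ufun13_pos hμpos (hμint x hx) hx) δ
  have hb : 0 < Ufun13 μ x ^ δ * ∑ j ∈ Finset.Icc 1 (k + 1), ν j :=
    mul_pos hD (Finset.sum_pos (fun j hj => hν j (Finset.mem_Icc.1 hj).1) ⟨1, by simp⟩)
  rw [θ13_eq_intervalIntegral_div μ hb.le]
  refine ⟨?_, div_pos (intervalIntegral_kIntegrand_pos hρ hfi hb) hk, ?_⟩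
  · rw [mul_one_sub, mul_div_cancel₀ _ hk.ne', k13_sub_intervalIntegral_kIntegrand hfi hb.le,
      rpow_mul (Ufun13_pos hμpos (hμint x hx) hx).le]
    exact setIntegral_Ioi_kIntegrand_lt_tsum hα hρ hγ hγσ hσ hD hν hmono hVt hdiv
  · rw [mul_comm (k13 ρ α γ σ), ← div_div]
    exact div_le_div_of_nonneg_right (intervalIntegral_kIntegrand_le hα hρ hγσ hfi hb.le) hk.le

/-- Lemma 3(i): ω_δ(σ,x) > k(σ)(1 − θ_δ(σ,x)) with
0 < θ_δ(σ,x) ≤ L (U^δ(x)V_{n₀})^{σ−γ}/(k(σ)(σ−γ)) for some L > 0. -/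
theorem stmt13 (μ : ℝ → ℝ) (ν Vt : ℕ → ℝ) (σ γ α ρ δ : ℝ) (n₀ : ℕ) (hn₀ : 1 ≤ n₀)
    (hμc : ContinuousOn μ (Set.Ioi 0)) (hμpos : ∀ x : ℝ, 0 < x → 0 < μ x)
    (hμint : ∀ x : ℝ, 0 < x → MeasureTheory.IntegrableOn μ (Set.Ioc 0 x))
    (hν : ∀ n : ℕ, 1 ≤ n → 0 < ν n)
    (hmono : ∀ n : ℕ, n₀ ≤ n → ν (n + 1) ≤ ν n)
    (hVt : ∀ n : ℕ, 1 ≤ n →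
      (∑ j ∈ Finset.Icc 1 n, ν j) - ν n / 2 ≤ Vt n ∧ Vt n ≤ ∑ j ∈ Finset.Icc 1 n, ν j)
    (hdiv : Filter.Tendsto (fun n : ℕ => ∑ j ∈ Finset.Icc 1 n, ν j)
      Filter.atTop Filter.atTop)
    (hα : 0 ≤ α) (hαρ : α ≤ ρ) (hρ : 0 < ρ)
    (hγ : 0 < γ) (hγσ : γ < σ) (hσ : σ ≤ 1) (hδ : δ = 1 ∨ δ = -1) :
    ∃ L : ℝ, 0 < L ∧ ∀ x : ℝ, 0 < x →
      k13 ρ α γ σ * (1 - θ13 μ ρ α γ σ δ (∑ j ∈ Finset.Icc 1 n₀, ν j) x)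
        < (∑' n : ℕ,
            h13 ρ α γ ((Ufun13 μ x) ^ δ * Vt (n + 1))
              * ((Ufun13 μ x) ^ (δ * σ) * ν (n + 1) / Vt (n + 1) ^ (1 - σ))) ∧
      0 < θ13 μ ρ α γ σ δ (∑ j ∈ Finset.Icc 1 n₀, ν j) x ∧
      θ13 μ ρ α γ σ δ (∑ j ∈ Finset.Icc 1 n₀, ν j) x
        ≤ L * ((Ufun13 μ x) ^ δ * ∑ j ∈ Finset.Icc 1 n₀, ν j) ^ (σ - γ)
            / (k13 ρ α γ σ * (σ - γ)) :=
  stmt13_general μ ν Vt σ γ α ρ δ n₀ hn₀ hμpos hμint hν hmono hVt hdiv hα hρ hγ hγσ hσ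
end
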